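/- Let a_1,…,a_n be distinct nonzero real numbers, let p_n(x) = ∏_{j=1}^n (x − a_j), and let p^σ_{n+1}, p^σ_n, p^σ_{n−1} be polynomials of degrees n+1, n, n−1 respectively, with p^σ_{n+1} monic, and λ_n, λ_{n−1} real numbers such that p^σ_{n+1}(x) = x p_n(x) − λ_n p^σ_n(x) − λ_{n−1} p^σ_{n−1}(x). Then for every (x_1,…,x_{n+2}) ∈ ℝ^{n+2}: P_{n+2}(x_1,…,x_{n+2}) − J^{σ,a}_{n+2}(x_1,…,x_{n+1}) = ((−1)^{n+1}/(n+2)) ( L(p^σ_{n+1})(x_1,…,x_{n+2}) + λ_n L(p^σ_n)(x_1,…,x_{n+1}) + λ_{n−1} L(p^σ_{n−1})(x_1,…,x_n) ). -/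

import Mathlib

/-!
Only the last recursion step of `P_{n+2}` sees its last argument, and it sees it linearly:
`P_{n+2}(x) - P_{n+2}(x')` is `(-1)^{n+1}/(n+2) · (x_{n+2} - x'_{n+2})` whenever `x` and `x'`
agree below `n+2`. On the other side, the three-term relation collapses the combination of
the `L(p^σ_k)` into `L(X pₙ)(x) = Σ_i [pₙ]_i x_{i+2}`. The data `x_k` for `2 ≤ k ≤ n+1` are
the moments `Σ_j a_j^k y_j`, and the moment functional annihilates every shift of `pₙ`
because `pₙ(a_j) = 0`; hence `L(X pₙ)(x) = x_{n+2} - u^σ_{n+2}`.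
-/

/-- The Kailath–Segall polynomials, defined by `P₀ = 1` and the recurrence
`Pₙ = (1/n)(Pₙ₋₁ x₁ − Pₙ₋₂ x₂ + ⋯ + (−1)^{n+1} P₀ xₙ)`. -/
noncomputable def KS {A : Type*} [CommRing A] [Algebra ℚ A] (x : ℕ → A) : ℕ → A
  | 0 => 1
  | n + 1 =>
      (((n : ℚ) + 1)⁻¹) •
        ∑ j ∈ Finset.range (n + 1), ((-1 : A) ^ j * KS x (n - j) * x (j + 1))
  termination_by n => n
  decreasing_by omega

/-- For `P(x) = c₀ + c₁ x + ⋯ + cₘ xᵐ` of degree `m`,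
`L(P)(x₁,…,x_{m+1}) = c₀ x₁ + ⋯ + cₘ x_{m+1}` (arguments indexed from 1). -/
noncomputable def Lpoly (P : Polynomial ℝ) (x : ℕ → ℝ) : ℝ :=
  ∑ i ∈ Finset.range (P.natDegree + 1), P.coeff i * x (i + 1)

open Finset Polynomial

section KailathSegall

variable {A : Type*} [CommRing A] [Algebra ℚ A]

@[simp]
lemma KS_zero (x : ℕ → A) : KS x 0 = 1 := by
  rw [KS]

lemma KS_congr {x x' : ℕ → A} {m : ℕ} (h : ∀ k ≤ m, x k = x' k) : KS x m = KS x' m := by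
  induction m using Nat.strong_induction_on with
  | _ m ih =>
    match m with
    | 0 => simp
    | m + 1 =>
      rw [KS, KS]
      congr 1
      refine sum_congr rfl fun j hj => ?_
      have hj : j < m + 1 := mem_range.mp hj
      rw [ih (m - j) (by omega) fun k hk => h k (by omega), h (j + 1) (by omega)]

lemma KS_succ_sub_KS_succ {x x' : ℕ → A} {m : ℕ} (h : ∀ k ≤ m, x k = x' k) :
    KS x (m + 1) - KS x' (m + 1) =
      ((m : ℚ) + 1)⁻¹ • ((-1 : A) ^ m * (x (m + 1) - x' (m + 1))) := by
  rw [KS, KS, ← smul_sub, ← sum_sub_distrib, sum_range_succ, Nat.sub_self, KS_zero, KS_zero,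
    sum_eq_zero fun j hj => ?_]
  · ring_nf
  have hj : j < m := mem_range.mp hj
  rw [KS_congr fun k hk => h k (by omega), h (j + 1) hj, sub_self]

end KailathSegall

lemma Lpoly_eq_sum_range {P : ℝ[X]} {m : ℕ} (hP : P.natDegree < m) (x : ℕ → ℝ) :
    Lpoly P x = ∑ i ∈ range m, P.coeff i * x (i + 1) := by
  refine sum_subset (range_subset_range.mpr (by omega)) fun i _ hi => ?_
  rw [coeff_eq_zero_of_natDegree_lt (by simpa using hi), zero_mul]

lemma sum_range_coeff_X_mul {R : Type*} [Semiring R] (p : R[X]) (x : ℕ → R) (m : ℕ) :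
    ∑ i ∈ range (m + 1), (X * p).coeff i * x (i + 1) = ∑ i ∈ range m, p.coeff i * x (i + 2) := by
  simp [sum_range_succ', coeff_X_mul]

lemma sum_coeff_mul_moments_eq_zero {R ι : Type*} [CommRing R] [Fintype ι] {p : R[X]}
    {a : ι → R} (hp : ∀ j, p.eval (a j) = 0) (y : ι → R) (s : ℕ) :
    ∑ i ∈ range (p.natDegree + 1), p.coeff i * ∑ j, a j ^ (i + s) * y j = 0 := by
  calc ∑ i ∈ range (p.natDegree + 1), p.coeff i * ∑ j, a j ^ (i + s) * y j
      = ∑ j, p.eval (a j) * (a j ^ s * y j) := by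
        simp_rw [eval_eq_sum_range, mul_sum, sum_mul]
        rw [sum_comm]
        exact sum_congr rfl fun j _ => sum_congr rfl fun i _ => by ring
    _ = 0 := by simp [hp]

lemma sum_coeff_mul_eq_sub_moment {R ι : Type*} [CommRing R] [Fintype ι] {p : R[X]}
    (hpm : p.Monic) {a : ι → R} (hp : ∀ j, p.eval (a j) = 0) {x : ℕ → R} {y : ι → R} {s : ℕ}
    (hx : ∀ k, s ≤ k → k < p.natDegree + s → x k = ∑ j, a j ^ k * y j) :
    ∑ i ∈ range (p.natDegree + 1), p.coeff i * x (i + s) =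
      x (p.natDegree + s) - ∑ j, a j ^ (p.natDegree + s) * y j := by
  have hzero := sum_coeff_mul_moments_eq_zero hp y s
  rw [sum_range_succ, hpm.coeff_natDegree, one_mul] at hzero ⊢
  rw [sum_congr rfl fun i hi => by rw [hx (i + s) (by omega) (by simpa using hi)]]
  linear_combination hzero

theorem kailathSegall_minus_J_teugels_general (n : ℕ) (a : Fin n → ℝ)
    (q1 q2 q3 : Polynomial ℝ)
    (hq1 : q1.natDegree = n + 1) (hq2 : q2.natDegree = n) (hq3 : q3.natDegree = n - 1)
    (l1 l2 : ℝ)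
    (hrel : q1 = Polynomial.X * (∏ j, (Polynomial.X - Polynomial.C (a j))) -
      Polynomial.C l1 * q2 - Polynomial.C l2 * q3) :
    ∀ x : ℕ → ℝ, ∀ y : Fin n → ℝ,
      (∀ k, 2 ≤ k → k ≤ n + 1 → x k = ∑ j, a j ^ k * y j) →
      KS x (n + 2) -
          KS (fun k => if k = n + 2 then ∑ j, a j ^ (n + 2) * y j else x k) (n + 2) =
        ((-1 : ℝ) ^ (n + 1) / (n + 2)) *
          (Lpoly q1 x + l1 * Lpoly q2 x + l2 * Lpoly q3 x) := by
  intro x y hx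
  set p : ℝ[X] := ∏ j, (X - C (a j))
  have hpm : p.Monic := monic_prod_of_monic _ _ fun j _ => monic_X_sub_C (a j)
  have hpdeg : p.natDegree = n := by
    simp [p, natDegree_prod_of_monic _ _ fun j _ => monic_X_sub_C (a j)]
  have hroots : ∀ j, p.eval (a j) = 0 := fun j => by
    simp only [p, eval_prod, eval_sub, eval_X, eval_C]
    exact prod_eq_zero (mem_univ j) (sub_self _)
  have hmoments := sum_coeff_mul_eq_sub_moment hpm hroots (s := 2) (x := x) (y := y)
    fun k hk hk' => hx k hk (by omega)
  rw [hpdeg] at hmoments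
  have hL : Lpoly q1 x + l1 * Lpoly q2 x + l2 * Lpoly q3 x =
      ∑ i ∈ range (n + 1 + 1), (X * p).coeff i * x (i + 1) := by
    rw [Lpoly_eq_sum_range (m := n + 2) (by omega), Lpoly_eq_sum_range (m := n + 2) (by omega),
      Lpoly_eq_sum_range (m := n + 2) (by omega), mul_sum, mul_sum, ← sum_add_distrib,
      ← sum_add_distrib, show X * p = q1 + C l1 * q2 + C l2 * q3 by rw [hrel]; ring]
    exact sum_congr rfl fun i _ => by simp only [coeff_add, coeff_C_mul]; ring
  rw [KS_succ_sub_KS_succ fun k hk => by simp [show k ≠ n + 2 by omega], hL,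
    sum_range_coeff_X_mul, hmoments, if_pos rfl, Rat.smul_def]
  push_cast
  ring

/-- Let `a₁,…,aₙ` be distinct nonzero reals, `pₙ(x) = ∏_j (x − a_j)`, and let
`q₁, q₂, q₃` be polynomials of degrees `n+1, n, n−1` with `q₁` monic and
`q₁(x) = x pₙ(x) − λₙ q₂(x) − λₙ₋₁ q₃(x)`. Then, with `(y_j)` solving
`x_k = Σ_j a_j^k y_j` (`k = 2,…,n+1`), `u^σ_{n+2} = Σ_j a_j^{n+2} y_j` and
`J^{σ,a}_{n+2}(x₁,…,x_{n+1}) = P_{n+2}(x₁,…,x_{n+1},u^σ_{n+2})`: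
`P_{n+2}(x₁,…,x_{n+2}) − J^{σ,a}_{n+2}(x₁,…,x_{n+1})
  = ((−1)^{n+1}/(n+2)) (L(q₁)(x₁,…,x_{n+2}) + λₙ L(q₂)(x₁,…,x_{n+1})
      + λₙ₋₁ L(q₃)(x₁,…,xₙ))`. -/
theorem kailathSegall_minus_J_teugels (n : ℕ) (hn : 1 ≤ n) (a : Fin n → ℝ)
    (ha : Function.Injective a) (ha0 : ∀ j, a j ≠ 0)
    (q1 q2 q3 : Polynomial ℝ) (hq1m : q1.Monic)
    (hq1 : q1.natDegree = n + 1) (hq2 : q2.natDegree = n) (hq3 : q3.natDegree = n - 1)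
    (l1 l2 : ℝ)
    (hrel : q1 = Polynomial.X * (∏ j, (Polynomial.X - Polynomial.C (a j))) -
      Polynomial.C l1 * q2 - Polynomial.C l2 * q3) :
    ∀ x : ℕ → ℝ, ∀ y : Fin n → ℝ,
      (∀ k, 2 ≤ k → k ≤ n + 1 → x k = ∑ j, a j ^ k * y j) →
      KS x (n + 2) -
          KS (fun k => if k = n + 2 then ∑ j, a j ^ (n + 2) * y j else x k) (n + 2) =
        ((-1 : ℝ) ^ (n + 1) / (n + 2)) *
          (Lpoly q1 x + l1 * Lpoly q2 x + l2 * Lpoly q3 x) :=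
  kailathSegall_minus_J_teugels_general n a q1 q2 q3 hq1 hq2 hq3 l1 l2 hrel
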